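/- Let (W,S) be a Coxeter system with length function ℓ, and for u, v ∈ W say that w ∈ W lies in the convex closure of u and v if ℓ(u⁻¹w) + ℓ(w⁻¹v) = ℓ(u⁻¹v). Suppose that for every three elements x, y, z ∈ W there exist u, v ∈ W such that x, y and z all lie in the convex closure of u and v. Then for every finite subset F ⊆ W there exist u, v ∈ W such that every element of F lies in the convex closure of u and v. -/

import Mathlib

/-!
Tits' sign representation of `W` on `W × ℤˣ` yields a cocycle `leftInvSign w r = ±1` which is
`-1` exactly when the wall of the reflection `r` separates the chamber `w` from `1`; with it one
proves the strong exchange condition in the form "the left inversions of `π ω` are the entries of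
the left inversion sequence of a reduced word `ω`". Consequently `w` lies on a minimal gallery
from `a` to `b` iff every wall separating `a` from `w` also separates `a` from `b`, and this makes
the convex closure of two chambers convex: it contains the convex closure of any two of its
elements. Given endpoints `u, v` for `F`, the hypothesis gives `u', v'` whose convex closure
contains `u`, `v` and a new element `a`, hence also `F ∪ {a}`; induction on `F` finishes.
-/

namespace CoxeterSystem

open List

variable {B W : Type*} [Group W] {M : CoxeterMatrix B} (cs : CoxeterSystem M W)

local prefix:100 "s" => cs.simple
local prefix:100 "π" => cs.wordProd
local prefix:100 "ℓ" => cs.length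
local prefix:100 "lis" => cs.leftInvSeq

theorem simple_mul_mul_simple_eq_simple_iff (i : B) (t : W) : s i * t * s i = s i ↔ t = s i := by
  rw [mul_eq_right, mul_eq_one_iff_inv_eq, inv_simple, eq_comm]

theorem alternatingWord_two_mul_succ (i j : B) (m : ℕ) :
    alternatingWord i j (2 * (m + 1)) = i :: j :: alternatingWord i j (2 * m) := by
  rw [show 2 * (m + 1) = 2 * m + 1 + 1 by ring, alternatingWord_succ', alternatingWord_succ',
    if_neg (by simp [parity_simps]), if_pos (even_two_mul m)]

theorem wordProd_alternatingWord_two_mul (i j : B) (m : ℕ) :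
    π (alternatingWord i j (2 * m)) = (s i * s j) ^ m := by
  rw [prod_alternatingWord_eq_mul_pow, if_pos (even_two_mul m), one_mul,
    Nat.mul_div_cancel_left m two_pos]

theorem wordProd_alternatingWord_two_mul_add_one (i j : B) (m : ℕ) :
    π (alternatingWord i j (2 * m + 1)) = s j * (s i * s j) ^ m := by
  rw [prod_alternatingWord_eq_mul_pow, if_neg (Nat.not_even_two_mul_add_one m),
    show (2 * m + 1) / 2 = m by omega]

section SignRepresentation

variable [DecidableEq W]

def signPerm (i : B) : Equiv.Perm (W × ℤˣ) :=
  Function.Involutive.toPerm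
    (fun p => (s i * p.1 * s i, if p.1 = s i then -p.2 else p.2))
    (by
      rintro ⟨t, ε⟩
      refine Prod.ext (by simp [mul_assoc]) ?_
      by_cases ht : t = s i
      · simp [ht]
      · simp only [if_neg ((simple_mul_mul_simple_eq_simple_iff cs i t).not.mpr ht), if_neg ht])

theorem signPerm_apply (i : B) (t : W) (ε : ℤˣ) :
    cs.signPerm i (t, ε) = (s i * t * s i, if t = s i then -ε else ε) := rfl

theorem prod_map_signPerm_apply (ω : List B) (t : W) (ε : ℤˣ) :
    (ω.map cs.signPerm).prod (t, ε) =
      (π ω * t * (π ω)⁻¹, (-1) ^ (lis ω).count (π ω * t * (π ω)⁻¹) * ε) := by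
  induction ω with
  | nil => simp
  | cons i ω ih =>
    set t' := π ω * t * (π ω)⁻¹
    have hconj : π (i :: ω) * t * (π (i :: ω))⁻¹ = s i * t' * s i := by
      simp [wordProd_cons, t', mul_assoc]
    have hlis : lis (i :: ω) = s i :: (lis ω).map (MulAut.conj (s i)) := rfl
    have hcount :
        ((lis ω).map (MulAut.conj (s i))).count (s i * t' * s i) = (lis ω).count t' := by
      rw [show s i * t' * s i = MulAut.conj (s i) t' by simp,
        count_map_of_injective _ _ (MulAut.conj (s i)).injective]
    rw [map_cons, prod_cons, Equiv.Perm.mul_apply, ih, signPerm_apply, hconj, hlis, count_cons,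
      hcount]
    by_cases ht : t' = s i
    · simp [ht, pow_succ]
    · have hne : s i ≠ s i * t' * s i :=
        Ne.symm ((simple_mul_mul_simple_eq_simple_iff cs i t').not.mpr ht)
      simp [ht, hne]

theorem prod_map_signPerm_alternatingWord (i j : B) (m : ℕ) :
    ((alternatingWord i j (2 * m)).map cs.signPerm).prod = (cs.signPerm i * cs.signPerm j) ^ m := by
  induction m with
  | zero => simp [alternatingWord]
  | succ m ih => rw [alternatingWord_two_mul_succ, map_cons, map_cons, prod_cons, prod_cons, ih,
      pow_succ', mul_assoc]

/-- The left inversion sequence of the braid word has period `M i j`, since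
`(s j * s i) ^ M i j = 1`. -/
theorem even_count_leftInvSeq_braidWord (i j : B) (t : W) :
    Even ((lis (alternatingWord i j (2 * M i j))).count t) := by
  set m := M i j
  set L := lis (alternatingWord i j (2 * m))
  have hlen : L.length = 2 * m := by simp [L]
  have hperiod : L.take m = L.drop m := by
    refine ext_getElem (by simp [hlen]; omega) fun k h₁ _ => ?_
    have hk : k < m := by simp only [length_take, hlen] at h₁; omega
    simp only [L, getElem_take, getElem_drop]
    rw [cs.getElem_leftInvSeq_alternatingWord i j m k (by omega),
      cs.getElem_leftInvSeq_alternatingWord i j m (m + k) (by omega),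
      wordProd_alternatingWord_two_mul_add_one, wordProd_alternatingWord_two_mul_add_one, pow_add,
      simple_mul_simple_pow', one_mul]
  refine ⟨(L.drop m).count t, ?_⟩
  conv_lhs => rw [← take_append_drop m L, count_append, hperiod]

theorem isLiftable_signPerm : M.IsLiftable cs.signPerm := by
  intro i j
  ext ⟨t, ε⟩ : 1
  rw [← prod_map_signPerm_alternatingWord, prod_map_signPerm_apply,
    wordProd_alternatingWord_two_mul, simple_mul_simple_pow]
  simp [(even_count_leftInvSeq_braidWord cs i j t).neg_one_pow]

def signRep : W →* Equiv.Perm (W × ℤˣ) := cs.lift ⟨cs.signPerm, cs.isLiftable_signPerm⟩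

theorem signRep_wordProd (ω : List B) : cs.signRep (π ω) = (ω.map cs.signPerm).prod := by
  rw [wordProd, map_list_prod, map_map]
  congr 1
  exact map_congr_left fun i _ => cs.lift_apply_simple cs.isLiftable_signPerm i

/-- By `leftInvSign_eq_neg_one_iff`, this is `-1` exactly when `r` is a left inversion of `w`. -/
def leftInvSign (w r : W) : ℤˣ := (cs.signRep w (w⁻¹ * r * w, 1)).2

theorem leftInvSign_wordProd (ω : List B) (r : W) :
    cs.leftInvSign (π ω) r = (-1) ^ (lis ω).count r := by
  simp [leftInvSign, signRep_wordProd, prod_map_signPerm_apply, mul_assoc]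

theorem signRep_apply (w t : W) (ε : ℤˣ) :
    cs.signRep w (t, ε) = (w * t * w⁻¹, cs.leftInvSign w (w * t * w⁻¹) * ε) := by
  obtain ⟨ω, rfl⟩ := cs.wordProd_surjective w
  rw [signRep_wordProd, prod_map_signPerm_apply, leftInvSign_wordProd]

theorem leftInvSign_mul (u v r : W) :
    cs.leftInvSign (u * v) r = cs.leftInvSign u r * cs.leftInvSign v (u⁻¹ * r * u) := by
  have hv : v * ((u * v)⁻¹ * r * (u * v)) * v⁻¹ = u⁻¹ * r * u := by group
  have hu : u * (u⁻¹ * r * u) * u⁻¹ = r := by group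
  rw [leftInvSign, map_mul, Equiv.Perm.mul_apply, signRep_apply cs v, hv, mul_one,
    signRep_apply cs u, hu]

theorem leftInvSign_one (r : W) : cs.leftInvSign 1 r = 1 := by
  simp [leftInvSign]

theorem leftInvSign_simple (i : B) (r : W) :
    cs.leftInvSign (s i) r = if r = s i then -1 else 1 := by
  rw [← wordProd_singleton, leftInvSign_wordProd, leftInvSeq_singleton, count_singleton]
  split_ifs <;> simp_all

/-- The cocycle identity applied to `t = w s w⁻¹` reduces this to `leftInvSign (s i) (s i) = -1`. -/
theorem leftInvSign_self {t : W} (ht : cs.IsReflection t) : cs.leftInvSign t t = -1 := by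
  obtain ⟨w, i, rfl⟩ := ht
  have hconj : w⁻¹ * (w * s i * w⁻¹) * w = s i := by group
  have hconj' : (w * s i)⁻¹ * (w * s i * w⁻¹) * (w * s i) = s i := by
    simp [mul_assoc]
  have hcancel : cs.leftInvSign w (w * s i * w⁻¹) * cs.leftInvSign w⁻¹ (s i) = 1 := by
    have := cs.leftInvSign_mul w w⁻¹ (w * s i * w⁻¹)
    rwa [mul_inv_cancel, leftInvSign_one, hconj, eq_comm] at this
  rw [leftInvSign_mul, leftInvSign_mul, hconj, hconj', leftInvSign_simple, if_pos rfl, mul_neg_one,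
    neg_mul, hcancel]

theorem leftInvSign_eq_neg_one_iff_mem {ω : List B} (hω : cs.IsReduced ω) (r : W) :
    cs.leftInvSign (π ω) r = -1 ↔ r ∈ lis ω := by
  rw [leftInvSign_wordProd]
  by_cases hr : r ∈ lis ω
  · simp [count_eq_one_of_mem hω.nodup_leftInvSeq hr, hr]
  · simp [count_eq_zero_of_not_mem hr, hr]

theorem leftInvSign_eq_neg_one_iff {t : W} (ht : cs.IsReflection t) (w : W) :
    cs.leftInvSign w t = -1 ↔ cs.IsLeftInversion w t := by
  have descent : ∀ w, cs.leftInvSign w t = -1 → cs.IsLeftInversion w t := by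
    intro w hw
    obtain ⟨ω, hω, rfl⟩ := cs.exists_isReduced w
    exact cs.isLeftInversion_of_mem_leftInvSeq hω ((cs.leftInvSign_eq_neg_one_iff_mem hω t).mp hw)
  refine ⟨descent w, fun hlt => ?_⟩
  rcases Int.units_eq_one_or (cs.leftInvSign w t) with h | h
  · have hflip : cs.leftInvSign (t * w) t = -1 := by
      rw [leftInvSign_mul, leftInvSign_self cs ht, ht.inv,
        show t * t * t = t by rw [ht.mul_self, one_mul], h, mul_one]
    have := (descent (t * w) hflip).2
    rw [← mul_assoc, ht.mul_self, one_mul] at this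
    exact absurd hlt.2 (by omega)
  · exact h

end SignRepresentation

theorem isLeftInversion_iff_mem_leftInvSeq {ω : List B} (hω : cs.IsReduced ω) {t : W} :
    cs.IsLeftInversion (π ω) t ↔ t ∈ lis ω := by
  classical
  refine ⟨fun h => ?_, cs.isLeftInversion_of_mem_leftInvSeq hω⟩
  rwa [← leftInvSign_eq_neg_one_iff_mem cs hω, leftInvSign_eq_neg_one_iff cs h.1]

theorem isLeftInversion_simple_mul_iff {i : B} {t : W} (ht : t ≠ s i) (w : W) :
    cs.IsLeftInversion (s i * w) t ↔ cs.IsLeftInversion w (s i * t * s i) := by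
  classical
  have hrefl : cs.IsReflection (s i * t * s i) ↔ cs.IsReflection t := by
    simpa [inv_simple] using cs.isReflection_conj_iff (s i) t
  by_cases hr : cs.IsReflection t
  · have hsign : cs.leftInvSign (s i * w) t = cs.leftInvSign w (s i * t * s i) := by
      rw [leftInvSign_mul, leftInvSign_simple, if_neg ht, one_mul, inv_simple]
    rw [← leftInvSign_eq_neg_one_iff cs hr, ← leftInvSign_eq_neg_one_iff cs (hrefl.mpr hr), hsign]
  · simp [IsLeftInversion, hr, hrefl]

theorem isLeftInversion_of_length_add_length_inv_mul {w e t : W}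
    (h : ℓ w + ℓ (w⁻¹ * e) = ℓ e) (ht : cs.IsLeftInversion w t) : cs.IsLeftInversion e t := by
  obtain ⟨ω, hω, rfl⟩ := cs.exists_isReduced w
  obtain ⟨ω', hω', hω'e⟩ := cs.exists_isReduced ((π ω)⁻¹ * e)
  have hprod : π (ω ++ ω') = e := by rw [wordProd_append, ← hω'e, mul_inv_cancel_left]
  have hred : cs.IsReduced (ω ++ ω') := by
    rw [IsReduced, hprod, length_append, ← hω.eq, ← hω'.eq, ← hω'e, h]
  rw [isLeftInversion_iff_mem_leftInvSeq cs hω] at ht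
  rw [← hprod, isLeftInversion_iff_mem_leftInvSeq cs hred]
  have htake := cs.leftInvSeq_take (ω ++ ω') ω.length
  rw [take_left] at htake
  rw [htake] at ht
  exact mem_of_mem_take ht

theorem length_add_length_inv_mul_of_isLeftInversion {w e : W}
    (h : ∀ t, cs.IsLeftInversion w t → cs.IsLeftInversion e t) : ℓ w + ℓ (w⁻¹ * e) = ℓ e := by
  obtain ⟨n, hn⟩ : ∃ n, ℓ w = n := ⟨_, rfl⟩
  induction n generalizing w e with
  | zero => simp [(cs.length_eq_zero_iff).mp hn]
  | succ n ih =>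
    obtain ⟨i, hi⟩ := cs.exists_leftDescent_of_ne_one (w := w) (by rintro rfl; simp at hn)
    have hie : cs.IsLeftDescent e i := by
      rw [← isLeftInversion_simple_iff_isLeftDescent] at hi ⊢
      exact h _ hi
    have hsub : ∀ t, cs.IsLeftInversion (s i * w) t → cs.IsLeftInversion (s i * e) t := by
      intro t ht
      have hts : t ≠ s i := by
        rintro rfl
        have hlt := ht.2
        rw [simple_mul_simple_cancel_left] at hlt
        exact lt_asymm hi hlt
      rw [isLeftInversion_simple_mul_iff cs hts] at ht ⊢
      exact h _ ht
    have hw := (cs.isLeftDescent_iff).mp hi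
    have he := (cs.isLeftDescent_iff).mp hie
    have := ih hsub (by omega)
    rw [mul_inv_rev, inv_simple, mul_assoc, simple_mul_simple_cancel_left] at this
    omega

theorem length_add_length_inv_mul_eq_iff (w e : W) :
    ℓ w + ℓ (w⁻¹ * e) = ℓ e ↔ ∀ t, cs.IsLeftInversion w t → cs.IsLeftInversion e t :=
  ⟨fun h _ => cs.isLeftInversion_of_length_add_length_inv_mul h,
    cs.length_add_length_inv_mul_of_isLeftInversion⟩

/-- The side of the wall of `r` on which a chamber `x` lies is recorded by whether `r` is a left
inversion of `x`. -/
def WallSeparates (r a b : W) : Prop := ¬(cs.IsLeftInversion a r ↔ cs.IsLeftInversion b r)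

theorem isLeftInversion_inv_mul_iff_wallSeparates {r : W} (hr : cs.IsReflection r) (a b : W) :
    cs.IsLeftInversion (a⁻¹ * b) (a⁻¹ * r * a) ↔ cs.WallSeparates r a b := by
  classical
  have hr' : cs.IsReflection (a⁻¹ * r * a) := by simpa using hr.conj a⁻¹
  have hcocycle := cs.leftInvSign_mul a (a⁻¹ * b) r
  rw [mul_inv_cancel_left] at hcocycle
  rw [WallSeparates, ← leftInvSign_eq_neg_one_iff cs hr', ← leftInvSign_eq_neg_one_iff cs hr,
    ← leftInvSign_eq_neg_one_iff cs hr, hcocycle]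
  rcases Int.units_eq_one_or (cs.leftInvSign a r) with hx | hx <;>
    rcases Int.units_eq_one_or (cs.leftInvSign (a⁻¹ * b) (a⁻¹ * r * a)) with hy | hy <;>
    simp [hx, hy]

def convexClosure (u v : W) : Set W := {w | ℓ (u⁻¹ * w) + ℓ (w⁻¹ * v) = ℓ (u⁻¹ * v)}

theorem mem_convexClosure_iff {a b w : W} :
    w ∈ cs.convexClosure a b ↔
      ∀ r, cs.IsReflection r → cs.WallSeparates r a w → cs.WallSeparates r a b := by
  have hx : w⁻¹ * b = (a⁻¹ * w)⁻¹ * (a⁻¹ * b) := by group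
  rw [convexClosure, Set.mem_ofPred_eq, hx, length_add_length_inv_mul_eq_iff]
  constructor
  · intro h r hr hsep
    rw [← isLeftInversion_inv_mul_iff_wallSeparates cs hr] at hsep ⊢
    exact h _ hsep
  · intro h t ht
    have hr : cs.IsReflection (a * t * a⁻¹) := ht.1.conj a
    have hconj : a⁻¹ * (a * t * a⁻¹) * a = t := by group
    have := h _ hr
    rwa [← isLeftInversion_inv_mul_iff_wallSeparates cs hr,
      ← isLeftInversion_inv_mul_iff_wallSeparates cs hr, hconj, imp_iff_right ht] at this

theorem convexClosure_subset {a b u v : W} (hu : u ∈ cs.convexClosure a b)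
    (hv : v ∈ cs.convexClosure a b) : cs.convexClosure u v ⊆ cs.convexClosure a b := by
  intro w hw
  rw [mem_convexClosure_iff] at hu hv hw ⊢
  intro r hr haw
  by_cases hau : cs.WallSeparates r a u
  · exact hu r hr hau
  · have huw : cs.WallSeparates r u w := by unfold WallSeparates at *; tauto
    have hav : cs.WallSeparates r a v := by
      have huv := hw r hr huw
      unfold WallSeparates at *; tauto
    exact hv r hr hav

end CoxeterSystem

namespace IntersectionsOfApartments

theorem statement_19 {B W : Type*} [Group W] {M : CoxeterMatrix B}
    (cs : CoxeterSystem M W)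
    (h3 : ∀ x y z : W, ∃ u v : W,
      (cs.length (u⁻¹ * x) + cs.length (x⁻¹ * v) = cs.length (u⁻¹ * v)) ∧
      (cs.length (u⁻¹ * y) + cs.length (y⁻¹ * v) = cs.length (u⁻¹ * v)) ∧
      (cs.length (u⁻¹ * z) + cs.length (z⁻¹ * v) = cs.length (u⁻¹ * v)))
    (F : Finset W) :
    ∃ u v : W, ∀ w ∈ F,
      cs.length (u⁻¹ * w) + cs.length (w⁻¹ * v) = cs.length (u⁻¹ * v) := by
  classical
  suffices h : ∃ u v : W, (F : Set W) ⊆ cs.convexClosure u v by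
    obtain ⟨u, v, h⟩ := h
    exact ⟨u, v, fun w hw => h hw⟩
  induction F using Finset.induction_on with
  | empty => exact ⟨1, 1, by simp⟩
  | insert a F _ ih =>
    obtain ⟨u, v, hF⟩ := ih
    obtain ⟨u', v', hu, hv, ha⟩ := h3 u v a
    refine ⟨u', v', ?_⟩
    rw [Finset.coe_insert, Set.insert_subset_iff]
    exact ⟨ha, hF.trans (cs.convexClosure_subset hu hv)⟩

end IntersectionsOfApartments
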